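/- arXiv:0808.2614 — 6 statements merged into one kernel-verified Lean document; each statement's English description precedes it below -/
import Mathlib

section
/- For every integer ℓ with 1 ≤ ℓ ≤ n and all x, y ∈ ℝⁿ with x ≠ y, all integrals below converge and G_ℓ(x,y) = Σ_{k=0}^{ℓ−1} binom(ℓ−1, k) · |x−y|^{k−n} · ∫₀^∞ r^{n−k−1} θ(x + r·(x−y)/|x−y|) dr, where binom(ℓ−1,k) denotes the binomial coefficient. In particular G_ℓ(x,y) also equals ∫₀^∞ τ^{n−ℓ}(τ+1)^{ℓ−1} θ(x + τ(x−y)) dτ. -/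
/-!
Substituting `t = τ + 1` turns `G_ℓ(x,y)` into `∫₀^∞ τ^{n-ℓ} (τ+1)^{ℓ-1} θ(x + τ(x-y)) dτ`.
Expanding `(τ+1)^{ℓ-1}` by the binomial theorem and rescaling `r = |x-y| τ` in each term
gives the sum formula. All integrands are continuous and, since `x ≠ y`, vanish outside a
compact set of parameters on the line through `x` in direction `x - y`.
-/

open MeasureTheory Set

noncomputable section

/-- The kernel `G_m(x,y) = ∫₁^∞ (t−1)^{n−m} t^{m−1} θ(y + t(x−y)) dt`. -/
def Gker {n : ℕ} (θ : EuclideanSpace ℝ (Fin n) → ℝ) (m : ℕ)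
    (x y : EuclideanSpace ℝ (Fin n)) : ℝ :=
  ∫ t in Set.Ioi (1 : ℝ), (t - 1) ^ (n - m) * t ^ (m - 1) * θ (y + t • (x - y))

lemma Continuous.integrable_mul_comp_line {E : Type*} [NormedAddCommGroup E] [NormedSpace ℝ E]
    {θ : E → ℝ} (hθ : Continuous θ) (hθc : HasCompactSupport θ) {P : ℝ → ℝ}
    (hP : Continuous P) (p : E) {v : E} (hv : v ≠ 0) :
    Integrable (fun t : ℝ => P t * θ (p + t • v)) := by
  have hline : Topology.IsClosedEmbedding (fun t : ℝ => p + t • v) :=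
    (Homeomorph.addLeft p).isClosedEmbedding.comp (isClosedEmbedding_smul_left hv)
  exact (hP.mul (hθ.comp hline.continuous)).integrable_of_hasCompactSupport
    (hθc.comp_isClosedEmbedding hline).mul_left

theorem integral_comp_add_right_Ioi {E : Type*} [NormedAddCommGroup E] [NormedSpace ℝ E]
    (g : ℝ → E) (a d : ℝ) :
    ∫ x in Ioi a, g (x + d) = ∫ x in Ioi (a + d), g x := by
  rw [← (measurePreserving_add_right volume d).setIntegral_preimage_emb
    (Homeomorph.addRight d).measurableEmbedding g, preimage_add_const_Ioi, add_sub_cancel_right]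

theorem integral_Ioi_pow_smul_comp_div {E : Type*} [NormedAddCommGroup E] [NormedSpace ℝ E]
    (g : ℝ → E) (m : ℕ) {c : ℝ} (hc : 0 < c) :
    ∫ r in Ioi 0, r ^ m • g (r / c) = c ^ (m + 1) • ∫ τ in Ioi 0, τ ^ m • g τ := by
  rw [← zero_mul c, ← integral_comp_mul_right_Ioi' _ _ hc]
  simp only [zero_mul, mul_div_cancel_right₀ _ hc.ne', mul_pow, mul_smul, integral_smul, pow_succ',
    smul_comm _ (c ^ m)]

theorem integral_Ioi_pow_mul_eq_zpow_mul_comp_div (g : ℝ → ℝ) {c : ℝ} (hc : 0 < c) {k n : ℕ}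
    (hk : k < n) :
    ∫ τ in Ioi 0, τ ^ (n - k - 1) * g τ =
      c ^ ((k : ℤ) - n) * ∫ r in Ioi 0, r ^ (n - k - 1) * g (r / c) := by
  have h := integral_Ioi_pow_smul_comp_div g (n - k - 1) hc
  simp only [smul_eq_mul] at h
  rw [h, ← mul_assoc, ← zpow_natCast, ← zpow_add₀ hc.ne']
  have hexp : (k : ℤ) - n + ((n - k - 1 + 1 : ℕ) : ℤ) = 0 := by omega
  rw [hexp, zpow_zero, one_mul]

lemma pow_sub_mul_add_one_pow_eq_sum {R : Type*} [CommSemiring R] (τ : R) {ℓ n : ℕ}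
    (hℓ1 : 1 ≤ ℓ) (hℓn : ℓ ≤ n) :
    τ ^ (n - ℓ) * (τ + 1) ^ (ℓ - 1) =
      ∑ k ∈ Finset.range ℓ, (Nat.choose (ℓ - 1) k : R) * τ ^ (n - k - 1) := by
  rw [add_comm τ 1, add_pow, Nat.sub_add_cancel hℓ1, Finset.mul_sum]
  refine Finset.sum_congr rfl fun k hk => ?_
  have hexp : n - k - 1 = n - ℓ + (ℓ - 1 - k) := by
    have := Finset.mem_range.mp hk
    omega
  rw [one_pow, one_mul, hexp, pow_add]
  ring

theorem Gker_eq_integral_Ioi_zero {n : ℕ} (θ : EuclideanSpace ℝ (Fin n) → ℝ) (m : ℕ)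
    (x y : EuclideanSpace ℝ (Fin n)) :
    Gker θ m x y =
      ∫ τ in Ioi (0 : ℝ), τ ^ (n - m) * (τ + 1) ^ (m - 1) * θ (x + τ • (x - y)) := by
  have hshift := integral_comp_add_right_Ioi
    (fun t : ℝ => (t - 1) ^ (n - m) * t ^ (m - 1) * θ (y + t • (x - y))) 0 1
  rw [zero_add] at hshift
  rw [Gker, ← hshift]
  refine setIntegral_congr_fun measurableSet_Ioi fun τ _ => ?_
  have hpoint : y + (τ + 1) • (x - y) = x + τ • (x - y) := by
    rw [add_smul, one_smul]
    abel
  rw [add_sub_cancel_right, hpoint]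

theorem stmt0_general {n : ℕ} (θ : EuclideanSpace ℝ (Fin n) → ℝ)
    (hθ : ContDiff ℝ (⊤ : ℕ∞) θ) (hθc : HasCompactSupport θ)
    (ℓ : ℕ) (hℓ1 : 1 ≤ ℓ) (hℓn : ℓ ≤ n)
    (x y : EuclideanSpace ℝ (Fin n)) (hxy : x ≠ y) :
    (IntegrableOn (fun t : ℝ => (t - 1) ^ (n - ℓ) * t ^ (ℓ - 1) * θ (y + t • (x - y)))
        (Set.Ioi 1)) ∧
    (∀ k ∈ Finset.range ℓ,
      IntegrableOn
        (fun r : ℝ => r ^ (n - k - 1) * θ (x + (r / ‖x - y‖) • (x - y))) (Set.Ioi 0)) ∧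
    (IntegrableOn (fun τ : ℝ => τ ^ (n - ℓ) * (τ + 1) ^ (ℓ - 1) * θ (x + τ • (x - y)))
        (Set.Ioi 0)) ∧
    (Gker θ ℓ x y =
      ∑ k ∈ Finset.range ℓ,
        (Nat.choose (ℓ - 1) k : ℝ) * ‖x - y‖ ^ ((k : ℤ) - (n : ℤ)) *
          ∫ r in Set.Ioi (0 : ℝ), r ^ (n - k - 1) * θ (x + (r / ‖x - y‖) • (x - y))) ∧
    (Gker θ ℓ x y =
      ∫ τ in Set.Ioi (0 : ℝ), τ ^ (n - ℓ) * (τ + 1) ^ (ℓ - 1) * θ (x + τ • (x - y))) := by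
  have hv : x - y ≠ 0 := sub_ne_zero.mpr hxy
  have hc : 0 < ‖x - y‖ := norm_pos_iff.mpr hv
  have hline {P : ℝ → ℝ} (hP : Continuous P) (p : EuclideanSpace ℝ (Fin n))
      {v : EuclideanSpace ℝ (Fin n)} (hv₀ : v ≠ 0) :=
    hθ.continuous.integrable_mul_comp_line hθc hP p hv₀
  refine ⟨(hline (by fun_prop) y hv).integrableOn, fun k _ => ?_,
    (hline (by fun_prop) x hv).integrableOn, ?_, Gker_eq_integral_Ioi_zero θ ℓ x y⟩
  · simp_rw [div_eq_mul_inv, mul_smul]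
    exact (hline (continuous_pow _) x (smul_ne_zero (inv_ne_zero hc.ne') hv)).integrableOn
  · calc Gker θ ℓ x y
        = ∫ τ in Ioi (0 : ℝ), ∑ k ∈ Finset.range ℓ,
            (Nat.choose (ℓ - 1) k : ℝ) * (τ ^ (n - k - 1) * θ (x + τ • (x - y))) := by
          rw [Gker_eq_integral_Ioi_zero]
          refine setIntegral_congr_fun measurableSet_Ioi fun τ _ => ?_
          simp only [pow_sub_mul_add_one_pow_eq_sum τ hℓ1 hℓn, Finset.sum_mul, mul_assoc]
      _ = ∑ k ∈ Finset.range ℓ, (Nat.choose (ℓ - 1) k : ℝ) *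
            ∫ τ in Ioi (0 : ℝ), τ ^ (n - k - 1) * θ (x + τ • (x - y)) := by
          rw [integral_finsetSum _ fun k _ => ((hline (continuous_pow _) x hv).const_mul _).integrableOn]
          simp only [integral_const_mul]
      _ = _ := by
          refine Finset.sum_congr rfl fun k hk => ?_
          rw [integral_Ioi_pow_mul_eq_zpow_mul_comp_div _ hc (Finset.mem_range.mp hk |>.trans_le hℓn),
            mul_assoc]

theorem stmt0 {n : ℕ} (hn : 1 ≤ n) (θ : EuclideanSpace ℝ (Fin n) → ℝ)
    (hθ : ContDiff ℝ (⊤ : ℕ∞) θ) (hθc : HasCompactSupport θ)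
    (ℓ : ℕ) (hℓ1 : 1 ≤ ℓ) (hℓn : ℓ ≤ n)
    (x y : EuclideanSpace ℝ (Fin n)) (hxy : x ≠ y) :
    (IntegrableOn (fun t : ℝ => (t - 1) ^ (n - ℓ) * t ^ (ℓ - 1) * θ (y + t • (x - y)))
        (Set.Ioi 1)) ∧
    (∀ k ∈ Finset.range ℓ,
      IntegrableOn
        (fun r : ℝ => r ^ (n - k - 1) * θ (x + (r / ‖x - y‖) • (x - y))) (Set.Ioi 0)) ∧
    (IntegrableOn (fun τ : ℝ => τ ^ (n - ℓ) * (τ + 1) ^ (ℓ - 1) * θ (x + τ • (x - y)))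
        (Set.Ioi 0)) ∧
    (Gker θ ℓ x y =
      ∑ k ∈ Finset.range ℓ,
        (Nat.choose (ℓ - 1) k : ℝ) * ‖x - y‖ ^ ((k : ℤ) - (n : ℤ)) *
          ∫ r in Set.Ioi (0 : ℝ), r ^ (n - k - 1) * θ (x + (r / ‖x - y‖) • (x - y))) ∧
    (Gker θ ℓ x y =
      ∫ τ in Set.Ioi (0 : ℝ), τ ^ (n - ℓ) * (τ + 1) ^ (ℓ - 1) * θ (x + τ • (x - y))) :=
  stmt0_general θ hθ hθc ℓ hℓ1 hℓn x y hxy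

end
end

section
/- Let 1 ≤ ℓ ≤ n, let j ∈ {1,…,n}, let f : ℝⁿ → ℝ be bounded and continuous, and let x ∈ ℝⁿ. Then both of the following integrals converge absolutely and are equal: ∫_{ℝⁿ} [∫₁^∞ (t−1)^{ℓ−1} t^{n−ℓ} θ(x + t(y−x)) dt] (x_j − y_j) f(y) dy = ∫_{ℝⁿ} θ(a) (x_j − a_j) [∫₀¹ t^{ℓ−1} f(a + t(x−a)) dt] da. (The inner kernel on the left is G_{n−ℓ+1}(y,x), so this identifies the Poincaré-type operator with its regularized path-integral form.) -/
/-!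
Both sides equal `∫₀¹ (1 - s)^(ℓ-1) H(s) ds`, where `H(s) = ∫ θ(a) (x_j - a_j) f(x + s(a - x)) da`.
On the right this is Fubini after reversing the segment from `a` to `x`. On the left, substituting
`a = x + t(y - x)` in the `t`-slice (volume scales by `tⁿ`, and `x_j - a_j = t(x_j - y_j)`) turns it
into `t⁻ⁿ⁻¹ (t - 1)^(ℓ-1) t^(n-ℓ) H(1/t)`. The same computation for absolute values shows that the
slices have `L¹` norm `O(t⁻²)`, which justifies swapping the integrals, and `s = 1/t` finishes.
-/

open MeasureTheory Set Module

section Homothety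

variable {E : Type*} [NormedAddCommGroup E] [NormedSpace ℝ E] [MeasurableSpace E] [BorelSpace E]
  [FiniteDimensional ℝ E] (μ : Measure E) [μ.IsAddHaarMeasure]

theorem integral_comp_homothety {F : Type*} [NormedAddCommGroup F] [NormedSpace ℝ F]
    (g : E → F) (x : E) (t : ℝ) :
    ∫ y, g (x + t • (y - x)) ∂μ = |(t ^ finrank ℝ E)⁻¹| • ∫ a, g a ∂μ := by
  rw [integral_sub_right_eq_self (fun y => g (x + t • y)) x,
    Measure.integral_comp_smul μ (fun a => g (x + a)) t, integral_add_left_eq_self g x]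

theorem integral_comp_homothety_mul (φ f : E → ℝ) (x : E) {t : ℝ} (ht : 0 < t) :
    ∫ y, φ (x + t • (y - x)) * f y ∂μ =
      (t ^ finrank ℝ E)⁻¹ * ∫ a, φ a * f (x + t⁻¹ • (a - x)) ∂μ := by
  have hinv : ∀ y, x + t⁻¹ • (x + t • (y - x) - x) = y := fun y => by
    rw [add_sub_cancel_left, inv_smul_smul₀ ht.ne', add_sub_cancel]
  calc ∫ y, φ (x + t • (y - x)) * f y ∂μ
      = ∫ y, (fun a => φ a * f (x + t⁻¹ • (a - x))) (x + t • (y - x)) ∂μ := by simp only [hinv]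
    _ = _ := by
      rw [integral_comp_homothety μ (fun a => φ a * f (x + t⁻¹ • (a - x))), smul_eq_mul,
        abs_of_pos (by positivity)]

variable {μ} in
theorem MeasureTheory.Integrable.comp_homothety_mul {φ f : E → ℝ} (hφ : Integrable φ μ)
    (hf : AEStronglyMeasurable f μ) {M : ℝ} (hfM : ∀ y, |f y| ≤ M) (x : E) {t : ℝ} (ht : t ≠ 0) :
    Integrable (fun y => φ (x + t • (y - x)) * f y) μ :=
  (((hφ.comp_add_left x).comp_smul ht).comp_sub_right x).mul_bdd hf
    (Filter.Eventually.of_forall hfM)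

end Homothety

theorem image_inv_Ioo_zero_one : (fun s : ℝ => s⁻¹) '' Ioo 0 1 = Ioi 1 := by
  rw [image_inv_eq_inv, inv_Ioo_0_left one_pos, inv_one]

section InvSubstitution

variable {F : Type*} [NormedAddCommGroup F] [NormedSpace ℝ F]

theorem integrableOn_Ioi_one_iff (g : ℝ → F) :
    IntegrableOn g (Ioi 1) ↔ IntegrableOn (fun s => (s ^ 2)⁻¹ • g s⁻¹) (Ioo 0 1) := by
  simpa only [image_inv_Ioo_zero_one, abs_neg, abs_inv, abs_pow, sq_abs] using
    integrableOn_image_iff_integrableOn_abs_deriv_smul (measurableSet_Ioo (a := 0) (b := 1))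
      (fun s hs => (hasDerivAt_inv hs.1.ne').hasDerivWithinAt) inv_injective.injOn g

theorem integral_Ioi_one_eq_integral_Ioo_inv (g : ℝ → F) :
    ∫ t in Ioi 1, g t = ∫ s in Ioo 0 1, (s ^ 2)⁻¹ • g s⁻¹ := by
  simpa only [image_inv_Ioo_zero_one, abs_neg, abs_inv, abs_pow, sq_abs] using
    integral_image_eq_integral_abs_deriv_smul (measurableSet_Ioo (a := 0) (b := 1))
      (fun s hs => (hasDerivAt_inv hs.1.ne').hasDerivWithinAt) inv_injective.injOn g

end InvSubstitution

-- `t = s⁻¹`, with Jacobian `s⁻²`, turns the `t`-weight of the left-hand side into `(1 - s)^(ℓ-1)`.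
theorem inv_sq_mul_kernel_inv {n ℓ : ℕ} (hℓ1 : 1 ≤ ℓ) (hℓn : ℓ ≤ n) {s : ℝ} (hs : 0 < s) :
    (s ^ 2)⁻¹ * ((s⁻¹ ^ n)⁻¹ * ((s⁻¹ - 1) ^ (ℓ - 1) * s⁻¹ ^ (n - ℓ) / s⁻¹)) =
      (1 - s) ^ (ℓ - 1) := by
  obtain ⟨l, rfl⟩ := Nat.exists_eq_add_of_le' hℓ1
  obtain ⟨m, rfl⟩ := Nat.exists_eq_add_of_le hℓn
  simp only [Nat.add_sub_cancel, Nat.add_sub_cancel_left]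
  have hs' := hs.ne'
  rw [show s⁻¹ - 1 = (1 - s) * s⁻¹ by field_simp, mul_pow]
  simp only [inv_pow, inv_inv, div_inv_eq_mul]
  field_simp
  ring

theorem intervalIntegral_segment_reverse {E : Type*} [AddCommGroup E] [Module ℝ E]
    (g : ℝ → ℝ) (f : E → ℝ) (a x : E) :
    ∫ t in (0 : ℝ)..1, g t * f (a + t • (x - a)) =
      ∫ u in Ioo 0 1, g (1 - u) * f (x + u • (a - x)) := by
  have hrev : ∀ u : ℝ, a + (1 - u) • (x - a) = x + u • (a - x) := fun u => by module
  simp only [← hrev]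
  rw [← integral_Ioc_eq_integral_Ioo, ← intervalIntegral.integral_of_le zero_le_one,
    intervalIntegral.integral_comp_sub_left (fun t => g t * f (a + t • (x - a))) 1]
  norm_num

section Fubini

variable {E : Type*} [NormedAddCommGroup E] [NormedSpace ℝ E] [MeasurableSpace E] [BorelSpace E]
  [FiniteDimensional ℝ E] {μ : Measure E} [μ.IsAddHaarMeasure]
  {φ f : E → ℝ} {M : ℝ}

theorem integral_integral_comp_homothety_mul (hφ : Continuous φ) (hφi : Integrable φ μ)
    (hf : Continuous f) (hfM : ∀ y, |f y| ≤ M) {s : Set ℝ} (hs : MeasurableSet s)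
    (hs0 : s ⊆ Ioi 0) {k : ℝ → ℝ} (hk : Measurable k)
    (hki : IntegrableOn (fun t => (t ^ finrank ℝ E)⁻¹ * k t) s) (x : E) :
    Integrable (fun y => ∫ t in s, k t * φ (x + t • (y - x)) * f y) μ ∧
      ∫ y, (∫ t in s, k t * φ (x + t • (y - x)) * f y) ∂μ =
        ∫ t in s, (t ^ finrank ℝ E)⁻¹ * k t * ∫ a, φ a * f (x + t⁻¹ • (a - x)) ∂μ := by
  set G : ℝ × E → ℝ := fun p => k p.1 * φ (x + p.1 • (p.2 - x)) * f p.2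
  have hG : AEStronglyMeasurable G ((volume.restrict s).prod μ) :=
    ((hk.comp measurable_fst).aestronglyMeasurable.mul
      (hφ.comp (by fun_prop)).aestronglyMeasurable).mul
      (hf.comp continuous_snd).aestronglyMeasurable
  have hslice : ∀ t ∈ s, ∫ y, G (t, y) ∂μ =
      (t ^ finrank ℝ E)⁻¹ * k t * ∫ a, φ a * f (x + t⁻¹ • (a - x)) ∂μ := fun t ht => by
    simp only [G, mul_assoc, integral_const_mul]
    rw [integral_comp_homothety_mul μ φ f x (hs0 ht)]
    ring
  have hslice_int : ∀ t ∈ s, Integrable (fun y => G (t, y)) μ := fun t ht => by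
    simpa only [G, mul_assoc] using
      (hφi.comp_homothety_mul hf.aestronglyMeasurable hfM x (hs0 ht).ne').const_mul (k t)
  have hnorm : ∀ t ∈ s, ∫ y, ‖G (t, y)‖ ∂μ ≤
      ‖(t ^ finrank ℝ E)⁻¹ * k t‖ * (M * ∫ a, |φ a| ∂μ) := fun t ht => by
    have ht0 : 0 < t := hs0 ht
    have hbound : ∫ a, |φ a| * |f (x + t⁻¹ • (a - x))| ∂μ ≤ M * ∫ a, |φ a| ∂μ := by
      rw [← integral_const_mul]
      refine integral_mono ?_ (hφi.abs.const_mul M) fun a => ?_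
      · exact hφi.abs.mul_bdd (hf.comp (by fun_prop)).abs.aestronglyMeasurable
          (Filter.Eventually.of_forall fun a => by simpa using hfM _)
      · simpa only [mul_comm M] using mul_le_mul_of_nonneg_left (hfM _) (abs_nonneg (φ a))
    calc ∫ y, ‖G (t, y)‖ ∂μ = |k t| * ∫ y, |φ (x + t • (y - x))| * |f y| ∂μ := by
          simp only [G, Real.norm_eq_abs, abs_mul, mul_assoc, integral_const_mul]
      _ = ‖(t ^ finrank ℝ E)⁻¹ * k t‖ * ∫ a, |φ a| * |f (x + t⁻¹ • (a - x))| ∂μ := by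
          rw [integral_comp_homothety_mul μ (fun a => |φ a|) (fun a => |f a|) x ht0,
            Real.norm_eq_abs, abs_mul, abs_of_pos (by positivity : (0 : ℝ) < (t ^ finrank ℝ E)⁻¹)]
          ring
      _ ≤ _ := mul_le_mul_of_nonneg_left hbound (norm_nonneg _)
  have hGi : Integrable G ((volume.restrict s).prod μ) := by
    rw [integrable_prod_iff hG]
    refine ⟨?_, ?_⟩
    · filter_upwards [self_mem_ae_restrict hs] with t ht
      exact hslice_int t ht
    · refine Integrable.mono' (hki.norm.mul_const (M * ∫ a, |φ a| ∂μ))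
        hG.norm.integral_prod_right' ?_
      filter_upwards [self_mem_ae_restrict hs] with t ht
      rw [Real.norm_eq_abs, abs_of_nonneg (integral_nonneg fun y => norm_nonneg _)]
      exact hnorm t ht
  refine ⟨hGi.integral_prod_right, ?_⟩
  rw [← integral_integral_swap hGi]
  exact setIntegral_congr_fun hs hslice

theorem integral_mul_integral_comp_homothety (hφ : Continuous φ) (hφi : Integrable φ μ)
    (hf : Continuous f) (hfM : ∀ y, |f y| ≤ M) {ν : Measure ℝ} [SFinite ν] {k : ℝ → ℝ}
    (hk : Integrable k ν) (x : E) :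
    Integrable (fun a => φ a * ∫ u, k u * f (x + u • (a - x)) ∂ν) μ ∧
      ∫ a, φ a * (∫ u, k u * f (x + u • (a - x)) ∂ν) ∂μ =
        ∫ u, k u * (∫ a, φ a * f (x + u • (a - x)) ∂μ) ∂ν := by
  set G : ℝ × E → ℝ := fun p => φ p.2 * (k p.1 * f (x + p.1 • (p.2 - x)))
  have hG : AEStronglyMeasurable G (ν.prod μ) :=
    (hφ.comp continuous_snd).aestronglyMeasurable.mul
      (hk.aestronglyMeasurable.comp_fst.mul (hf.comp (by fun_prop)).aestronglyMeasurable)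
  have hGi : Integrable G (ν.prod μ) := by
    refine Integrable.mono' (hk.norm.mul_prod (hφi.norm.mul_const M)) hG
      (Filter.Eventually.of_forall fun p => ?_)
    simp only [G, Real.norm_eq_abs, abs_mul]
    have := mul_le_mul_of_nonneg_left (hfM (x + p.1 • (p.2 - x))) (abs_nonneg (k p.1 * φ p.2))
    rw [abs_mul] at this
    linarith
  have hleft : ∀ a, ∫ u, G (u, a) ∂ν = φ a * ∫ u, k u * f (x + u • (a - x)) ∂ν := fun a =>
    integral_const_mul (φ a) _
  have hright : ∀ u, ∫ a, G (u, a) ∂μ = k u * ∫ a, φ a * f (x + u • (a - x)) ∂μ := fun u => by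
    simp only [G, mul_left_comm (φ _), integral_const_mul]
  refine ⟨?_, ?_⟩
  · simpa only [hleft] using hGi.integral_prod_right
  · simp only [← hleft, ← hright]
    exact (integral_integral_swap hGi).symm

end Fubini

theorem stmt2_general {n : ℕ} (θ : EuclideanSpace ℝ (Fin n) → ℝ)
    (hθ : ContDiff ℝ (⊤ : ℕ∞) θ) (hθc : HasCompactSupport θ)
    (ℓ : ℕ) (hℓ1 : 1 ≤ ℓ) (hℓn : ℓ ≤ n) (j : Fin n)
    (f : EuclideanSpace ℝ (Fin n) → ℝ) (hf : Continuous f)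
    (M : ℝ) (hfM : ∀ y, |f y| ≤ M) (x : EuclideanSpace ℝ (Fin n)) :
    (Integrable (fun y : EuclideanSpace ℝ (Fin n) =>
        (∫ t in Set.Ioi (1 : ℝ), (t - 1) ^ (ℓ - 1) * t ^ (n - ℓ) * θ (x + t • (y - x))) *
          (x j - y j) * f y)) ∧
    (Integrable (fun a : EuclideanSpace ℝ (Fin n) =>
        θ a * (x j - a j) * ∫ t in (0 : ℝ)..1, t ^ (ℓ - 1) * f (a + t • (x - a)))) ∧
    ((∫ y : EuclideanSpace ℝ (Fin n),
        (∫ t in Set.Ioi (1 : ℝ), (t - 1) ^ (ℓ - 1) * t ^ (n - ℓ) * θ (x + t • (y - x))) *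
          (x j - y j) * f y) =
      ∫ a : EuclideanSpace ℝ (Fin n),
        θ a * (x j - a j) * ∫ t in (0 : ℝ)..1, t ^ (ℓ - 1) * f (a + t • (x - a))) := by
  set φ : EuclideanSpace ℝ (Fin n) → ℝ := fun a => θ a * (x j - a j)
  set k : ℝ → ℝ := fun t => (t - 1) ^ (ℓ - 1) * t ^ (n - ℓ) / t
  have hφ : Continuous φ := by fun_prop
  have hφi : Integrable φ := hφ.integrable_of_hasCompactSupport hθc.mul_right
  have hker : ∀ s ∈ Ioo (0 : ℝ) 1, (s ^ 2)⁻¹ * ((s⁻¹ ^ n)⁻¹ * k s⁻¹) = (1 - s) ^ (ℓ - 1) :=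
    fun s hs => inv_sq_mul_kernel_inv hℓ1 hℓn hs.1
  have hpow : IntegrableOn (fun u : ℝ => (1 - u) ^ (ℓ - 1)) (Ioo 0 1) :=
    ((continuous_const.sub continuous_id).pow (ℓ - 1)).integrableOn_Icc.mono_set
      Ioo_subset_Icc_self
  have hki : IntegrableOn (fun t => (t ^ n)⁻¹ * k t) (Ioi 1) := by
    rw [integrableOn_Ioi_one_iff]
    exact hpow.congr_fun (fun s hs => (hker s hs).symm) measurableSet_Ioo
  have hlhs : ∀ y, (∫ t in Ioi 1, (t - 1) ^ (ℓ - 1) * t ^ (n - ℓ) * θ (x + t • (y - x))) *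
      (x j - y j) * f y = ∫ t in Ioi 1, k t * φ (x + t • (y - x)) * f y := fun y => by
    rw [← integral_mul_const, ← integral_mul_const]
    refine setIntegral_congr_fun measurableSet_Ioi fun t ht => ?_
    have ht0 : (t : ℝ) ≠ 0 := (zero_lt_one.trans ht).ne'
    simp only [φ, k, PiLp.add_apply, PiLp.smul_apply, PiLp.sub_apply, smul_eq_mul]
    field_simp
    ring
  have hrhs : ∀ a, θ a * (x j - a j) * ∫ t in (0 : ℝ)..1, t ^ (ℓ - 1) * f (a + t • (x - a)) =
      φ a * ∫ u in Ioo 0 1, (1 - u) ^ (ℓ - 1) * f (x + u • (a - x)) := fun a => by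
    rw [intervalIntegral_segment_reverse (fun t => t ^ (ℓ - 1))]
  obtain ⟨hint₁, heq₁⟩ := integral_integral_comp_homothety_mul hφ hφi hf hfM measurableSet_Ioi
    (Ioi_subset_Ioi zero_le_one) (k := k) (by fun_prop)
    (by simpa only [finrank_euclideanSpace_fin] using hki) x
  obtain ⟨hint₂, heq₂⟩ := integral_mul_integral_comp_homothety hφ hφi hf hfM hpow x
  simp only [hlhs, hrhs]
  refine ⟨hint₁, hint₂, ?_⟩
  rw [heq₁, heq₂, integral_Ioi_one_eq_integral_Ioo_inv]
  refine setIntegral_congr_fun measurableSet_Ioo fun s hs => ?_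
  simp only [smul_eq_mul, finrank_euclideanSpace_fin, inv_inv, ← hker s hs]
  ring

theorem stmt2 {n : ℕ} (hn : 1 ≤ n) (θ : EuclideanSpace ℝ (Fin n) → ℝ)
    (hθ : ContDiff ℝ (⊤ : ℕ∞) θ) (hθc : HasCompactSupport θ)
    (ℓ : ℕ) (hℓ1 : 1 ≤ ℓ) (hℓn : ℓ ≤ n) (j : Fin n)
    (f : EuclideanSpace ℝ (Fin n) → ℝ) (hf : Continuous f)
    (M : ℝ) (hfM : ∀ y, |f y| ≤ M) (x : EuclideanSpace ℝ (Fin n)) :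
    (Integrable (fun y : EuclideanSpace ℝ (Fin n) =>
        (∫ t in Set.Ioi (1 : ℝ), (t - 1) ^ (ℓ - 1) * t ^ (n - ℓ) * θ (x + t • (y - x))) *
          (x j - y j) * f y)) ∧
    (Integrable (fun a : EuclideanSpace ℝ (Fin n) =>
        θ a * (x j - a j) * ∫ t in (0 : ℝ)..1, t ^ (ℓ - 1) * f (a + t • (x - a)))) ∧
    ((∫ y : EuclideanSpace ℝ (Fin n),
        (∫ t in Set.Ioi (1 : ℝ), (t - 1) ^ (ℓ - 1) * t ^ (n - ℓ) * θ (x + t • (y - x))) *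
          (x j - y j) * f y) =
      ∫ a : EuclideanSpace ℝ (Fin n),
        θ a * (x j - a j) * ∫ t in (0 : ℝ)..1, t ^ (ℓ - 1) * f (a + t • (x - a))) :=
  stmt2_general θ hθ hθc ℓ hℓ1 hℓn j f hf M hfM x
end

section
/- Let 1 ≤ m ≤ n. (i) For all x, y ∈ ℝⁿ with x ≠ y: if y does not belong to the convex hull of {x} ∪ supp θ, then G_m(y,x) = 0. (ii) Consequently, if Ω ⊆ ℝⁿ is open and starlike with respect to an open ball B with supp θ ⊆ B, if f : ℝⁿ → ℝ is bounded and continuous with f = 0 on Ω, and if x ∈ Ω, then ∫_{ℝⁿ} G_m(y,x)(x_j − y_j) f(y) dy = 0 for every j ∈ {1,…,n}; that is, the value of the Poincaré-type operator at x ∈ Ω depends only on the restriction of f to Ω. -/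
/-! If `θ (x + t • (y - x)) ≠ 0` for some `t > 1`, then `y` lies on the segment from `x` to that
point of `tsupport θ`, hence in the convex hull of `{x} ∪ tsupport θ`. So outside this hull the
integrand of `G_m(y, x)` vanishes identically on `(1, ∞)`. In (ii), starlikeness puts that hull
inside `Ω`, where `f` vanishes, so the integrand over `y` is zero everywhere. -/

open MeasureTheory Set

noncomputable section

theorem Convex.mem_of_add_smul_sub_mem {𝕜 E : Type*} [Field 𝕜] [LinearOrder 𝕜]
    [IsStrictOrderedRing 𝕜] [AddCommGroup E] [Module 𝕜 E] {s : Set E} (hs : Convex 𝕜 s)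
    {x y : E} {t : 𝕜} (ht : 1 ≤ t) (hx : x ∈ s) (hz : x + t • (y - x) ∈ s) : y ∈ s := by
  have ht0 : t ≠ 0 := (zero_lt_one.trans_le ht).ne'
  have hy : y = x + t⁻¹ • ((x + t • (y - x)) - x) := by
    rw [add_sub_cancel_left, smul_smul, inv_mul_cancel₀ ht0, one_smul, add_sub_cancel]
  rw [hy]
  exact hs.add_smul_sub_mem hx hz ⟨inv_nonneg.2 (zero_le_one.trans ht), inv_le_one_of_one_le₀ ht⟩

theorem Gker_eq_zero_of_notMem_convexHull {n : ℕ} (θ : EuclideanSpace ℝ (Fin n) → ℝ) (m : ℕ)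
    {x y : EuclideanSpace ℝ (Fin n)} (hy : y ∉ convexHull ℝ ({x} ∪ tsupport θ)) :
    Gker θ m y x = 0 := by
  have hθ : ∀ t ∈ Ioi (1 : ℝ), θ (x + t • (y - x)) = 0 := fun t ht ↦
    image_eq_zero_of_notMem_tsupport fun hz ↦ hy <|
      (convex_convexHull ℝ _).mem_of_add_smul_sub_mem (le_of_lt ht)
        (subset_convexHull ℝ _ (Or.inl rfl)) (subset_convexHull ℝ _ (Or.inr hz))
  rw [Gker, setIntegral_congr_fun measurableSet_Ioi fun t ht ↦ by rw [hθ t ht, mul_zero]]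
  exact integral_zero _ _

theorem Gker_mul_eq_zero_of_convexHull_subset {n : ℕ} (θ : EuclideanSpace ℝ (Fin n) → ℝ)
    (m : ℕ) {Ω : Set (EuclideanSpace ℝ (Fin n))} {x : EuclideanSpace ℝ (Fin n)}
    (hΩ : convexHull ℝ ({x} ∪ tsupport θ) ⊆ Ω) {f : EuclideanSpace ℝ (Fin n) → ℝ}
    (hf : ∀ y ∈ Ω, f y = 0) (y : EuclideanSpace ℝ (Fin n)) : Gker θ m y x * f y = 0 := by
  by_cases hy : y ∈ Ω
  · rw [hf y hy, mul_zero]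
  · rw [Gker_eq_zero_of_notMem_convexHull θ m fun h ↦ hy (hΩ h), zero_mul]

theorem stmt3_general {n : ℕ} (θ : EuclideanSpace ℝ (Fin n) → ℝ)
    (m : ℕ) :
    -- (i)
    (∀ x y : EuclideanSpace ℝ (Fin n), x ≠ y →
        y ∉ convexHull ℝ ({x} ∪ tsupport θ) → Gker θ m y x = 0) ∧
    -- (ii)
    (∀ (Ω : Set (EuclideanSpace ℝ (Fin n))) (c : EuclideanSpace ℝ (Fin n)) (r : ℝ),
        IsOpen Ω → 0 < r → tsupport θ ⊆ Metric.ball c r →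
        (∀ z ∈ Ω, convexHull ℝ ({z} ∪ Metric.ball c r) ⊆ Ω) →
        ∀ f : EuclideanSpace ℝ (Fin n) → ℝ, Continuous f → (∃ M, ∀ y, |f y| ≤ M) →
          (∀ y ∈ Ω, f y = 0) →
          ∀ x ∈ Ω, ∀ j : Fin n,
            (∫ y : EuclideanSpace ℝ (Fin n), Gker θ m y x * (x j - y j) * f y) = 0) := by
  refine ⟨fun x y _ hy ↦ Gker_eq_zero_of_notMem_convexHull θ m hy, ?_⟩
  intro Ω c r _ _ hθB hstar f _ _ hf x hx j
  have hΩ : convexHull ℝ ({x} ∪ tsupport θ) ⊆ Ω :=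
    (convexHull_mono (union_subset_union_right _ hθB)).trans (hstar x hx)
  have hzero : ∀ y, Gker θ m y x * (x j - y j) * f y = 0 := fun y ↦ by
    rw [mul_right_comm, Gker_mul_eq_zero_of_convexHull_subset θ m hΩ hf y, zero_mul]
  simp only [hzero, integral_zero]

theorem stmt3 {n : ℕ} (hn : 1 ≤ n) (θ : EuclideanSpace ℝ (Fin n) → ℝ)
    (hθ : ContDiff ℝ (⊤ : ℕ∞) θ) (hθc : HasCompactSupport θ)
    (m : ℕ) (hm1 : 1 ≤ m) (hmn : m ≤ n) :
    -- (i)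
    (∀ x y : EuclideanSpace ℝ (Fin n), x ≠ y →
        y ∉ convexHull ℝ ({x} ∪ tsupport θ) → Gker θ m y x = 0) ∧
    -- (ii)
    (∀ (Ω : Set (EuclideanSpace ℝ (Fin n))) (c : EuclideanSpace ℝ (Fin n)) (r : ℝ),
        IsOpen Ω → 0 < r → tsupport θ ⊆ Metric.ball c r →
        (∀ z ∈ Ω, convexHull ℝ ({z} ∪ Metric.ball c r) ⊆ Ω) →
        ∀ f : EuclideanSpace ℝ (Fin n) → ℝ, Continuous f → (∃ M, ∀ y, |f y| ≤ M) →
          (∀ y ∈ Ω, f y = 0) →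
          ∀ x ∈ Ω, ∀ j : Fin n,
            (∫ y : EuclideanSpace ℝ (Fin n), Gker θ m y x * (x j - y j) * f y) = 0) :=
  stmt3_general θ m

end
end

section
/- Let 1 ≤ ℓ ≤ n, let j ∈ {1,…,n}, and let p : ℝⁿ → ℝ be a polynomial function (the evaluation of a multivariate polynomial) of total degree at most d. Then the function x ↦ ∫_{ℝⁿ} θ(a) (x_j − a_j) [∫₀¹ t^{ℓ−1} p(a + t(x−a)) dt] da is a polynomial function on ℝⁿ of total degree at most d + 1. That is, the regularized Poincaré-type operator maps differential forms with polynomial coefficients to differential forms with polynomial coefficients. -/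
/-!
For fixed `(a, t)` the integrand `(x_j - a_j) t^(ℓ-1) P(a + t (x - a))` is a polynomial in `x` of
degree at most `d + 1` whose coefficients are continuous functions of `(a, t)`. Viewing it as a
polynomial over the ring `C(ℝⁿ × ℝ, ℝ)`, the iterated integral against `θ(a) da dt` is a linear
functional on the coefficient ring, and applying a linear functional to a polynomial evaluated at
scalars amounts to applying it coefficientwise, which does not raise the degree.
-/

open MeasureTheory Set

noncomputable section

namespace MvPolynomial

section Substitution

variable {R S σ τ : Type*} [CommSemiring R] [CommSemiring S] [Algebra R S]

theorem totalDegree_aeval_le (g : σ → MvPolynomial τ S) {D : ℕ}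
    (hg : ∀ i, (g i).totalDegree ≤ D) (P : MvPolynomial σ R) :
    (aeval g P).totalDegree ≤ P.totalDegree * D := by
  conv_lhs => rw [P.as_sum]
  rw [map_sum]
  refine totalDegree_finsetSum_le fun m hm => ?_
  rw [aeval_monomial, algebraMap_apply]
  calc (C (algebraMap R S (coeff m P)) * m.prod fun i e => g i ^ e).totalDegree
      ≤ 0 + ∑ i ∈ m.support, (g i ^ m i).totalDegree :=
        (totalDegree_mul _ _).trans (add_le_add (totalDegree_C _).le (totalDegree_finsetProd _ _))
    _ ≤ ∑ i ∈ m.support, m i * D := by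
        rw [zero_add]
        exact Finset.sum_le_sum fun i _ =>
          (totalDegree_pow _ _).trans (Nat.mul_le_mul_left _ (hg i))
    _ = (m.sum fun _ e => e) * D := by rw [Finsupp.sum, Finset.sum_mul]
    _ ≤ P.totalDegree * D := Nat.mul_le_mul_right _ (le_totalDegree hm)

end Substitution

section MapCoeffs

variable {R A σ : Type*} [CommSemiring R] [CommSemiring A] [Algebra R A]

def mapCoeffs (L : A →ₗ[R] R) (Q : MvPolynomial σ A) : MvPolynomial σ R :=
  ∑ m ∈ Q.support, monomial m (L (coeff m Q))

theorem totalDegree_mapCoeffs_le (L : A →ₗ[R] R) (Q : MvPolynomial σ A) :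
    (mapCoeffs L Q).totalDegree ≤ Q.totalDegree :=
  totalDegree_finsetSum_le fun _ hm => (totalDegree_monomial_le _ _).trans (le_totalDegree hm)

theorem eval_mapCoeffs (L : A →ₗ[R] R) (Q : MvPolynomial σ A) (x : σ → R) :
    eval x (mapCoeffs L Q) = L (eval (fun i => algebraMap R A (x i)) Q) := by
  conv_rhs => rw [Q.as_sum]
  simp only [mapCoeffs, map_sum, eval_monomial]
  refine Finset.sum_congr rfl fun m _ => ?_
  have hmonomial : (m.prod fun i e => algebraMap R A (x i) ^ e) =
      algebraMap R A (m.prod fun i e => x i ^ e) := by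
    simp [map_finsuppProd]
  rw [hmonomial, ← Algebra.commutes, ← Algebra.smul_def, map_smul, smul_eq_mul, mul_comm]

end MapCoeffs

end MvPolynomial

section WeightedIntegral

variable {X : Type*} [TopologicalSpace X] [MeasurableSpace X] [OpensMeasurableSpace X]
  (μ : Measure X) [IsFiniteMeasureOnCompacts μ] {θ : X → ℝ}

theorem integrable_mul_intervalIntegral (hθ : Continuous θ) (hθc : HasCompactSupport θ)
    (c : C(X × ℝ, ℝ)) : Integrable (fun a => θ a * ∫ t in (0 : ℝ)..1, c (a, t)) μ :=
  (hθ.mul (intervalIntegral.continuous_parametric_intervalIntegral_of_continuous'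
    (f := fun a t => c (a, t)) c.continuous 0 1)).integrable_of_hasCompactSupport hθc.mul_right

def weightedIteratedIntegral (hθ : Continuous θ) (hθc : HasCompactSupport θ) :
    C(X × ℝ, ℝ) →ₗ[ℝ] ℝ where
  toFun c := ∫ a, θ a * (∫ t in (0 : ℝ)..1, c (a, t)) ∂μ
  map_add' c d := by
    have hint : ∀ (e : C(X × ℝ, ℝ)) a, IntervalIntegrable (fun t => e (a, t)) volume 0 1 :=
      fun e a => (e.continuous.comp (Continuous.prodMk_right a)).intervalIntegrable 0 1
    simp only [ContinuousMap.add_apply, intervalIntegral.integral_add (hint c _) (hint d _),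
      mul_add]
    exact integral_add (integrable_mul_intervalIntegral μ hθ hθc c)
      (integrable_mul_intervalIntegral μ hθ hθc d)
  map_smul' r c := by
    simp only [ContinuousMap.smul_apply, smul_eq_mul, intervalIntegral.integral_const_mul,
      RingHom.id_apply, mul_left_comm _ r, integral_const_mul]

theorem weightedIteratedIntegral_apply (hθ : Continuous θ) (hθc : HasCompactSupport θ)
    (c : C(X × ℝ, ℝ)) :
    weightedIteratedIntegral μ hθ hθc c = ∫ a, θ a * (∫ t in (0 : ℝ)..1, c (a, t)) ∂μ :=
  rfl

end WeightedIntegral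

section PoincareIntegrand

open MvPolynomial

variable {ι : Type*}

def coordFst (i : ι) : C(EuclideanSpace ℝ ι × ℝ, ℝ) := ⟨fun y => y.1 i, by fun_prop⟩

def poincareIntegrand (ℓ : ℕ) (j : ι) (P : MvPolynomial ι ℝ) :
    MvPolynomial ι C(EuclideanSpace ℝ ι × ℝ, ℝ) :=
  (X j - C (coordFst j)) * C (ContinuousMap.snd ^ (ℓ - 1)) *
    aeval (fun i => C (coordFst i) + C ContinuousMap.snd * (X i - C (coordFst i))) P

theorem totalDegree_poincareIntegrand_le (ℓ : ℕ) (j : ι) (P : MvPolynomial ι ℝ) :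
    (poincareIntegrand ℓ j P).totalDegree ≤ P.totalDegree + 1 := by
  have hX_sub_C (c : C(EuclideanSpace ℝ ι × ℝ, ℝ)) (i : ι) : (X i - C c).totalDegree ≤ 1 := by
    simpa only [totalDegree_X] using totalDegree_sub_C_le (X i) c
  have hsubst (i : ι) :
      (C (coordFst i) + C ContinuousMap.snd * (X i - C (coordFst i))).totalDegree ≤ 1 := by
    refine (totalDegree_add _ _).trans (max_le ((totalDegree_C _).trans_le zero_le_one) ?_)
    refine (totalDegree_mul _ _).trans ?_
    rw [totalDegree_C, zero_add]
    exact hX_sub_C _ i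
  rw [poincareIntegrand]
  calc _ ≤ 1 + 0 + P.totalDegree * 1 :=
        (totalDegree_mul _ _).trans (add_le_add ((totalDegree_mul _ _).trans
          (add_le_add (hX_sub_C _ j) (totalDegree_C _).le)) (totalDegree_aeval_le _ hsubst P))
    _ = P.totalDegree + 1 := by ring

theorem poincareIntegrand_eval_apply (ℓ : ℕ) (j : ι) (P : MvPolynomial ι ℝ)
    (x a : EuclideanSpace ℝ ι) (t : ℝ) :
    eval (fun i => algebraMap ℝ C(EuclideanSpace ℝ ι × ℝ, ℝ) (x i))
        (poincareIntegrand ℓ j P) (a, t) =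
      (x j - a j) * (t ^ (ℓ - 1) * eval (fun i => (a + t • (x - a)) i) P) := by
  let Φ : MvPolynomial ι C(EuclideanSpace ℝ ι × ℝ, ℝ) →ₐ[ℝ] ℝ :=
    (ContinuousMap.evalAlgHom ℝ ℝ (a, t)).comp
      ((aeval fun i => algebraMap ℝ C(EuclideanSpace ℝ ι × ℝ, ℝ) (x i)).restrictScalars ℝ)
  have hΦ (q) : eval (fun i => algebraMap ℝ C(EuclideanSpace ℝ ι × ℝ, ℝ) (x i)) q (a, t) = Φ q :=
    by simp [Φ]
  rw [hΦ, poincareIntegrand, map_mul, map_mul, ← AlgHom.comp_apply, comp_aeval,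
    ← coe_aeval_eq_eval]
  simp [Φ, coordFst, mul_assoc]

end PoincareIntegrand

theorem stmt5_general {n : ℕ} (θ : EuclideanSpace ℝ (Fin n) → ℝ)
    (hθ : ContDiff ℝ (⊤ : ℕ∞) θ) (hθc : HasCompactSupport θ)
    (ℓ : ℕ) (j : Fin n)
    (d : ℕ) (P : MvPolynomial (Fin n) ℝ) (hP : P.totalDegree ≤ d) :
    ∃ Q : MvPolynomial (Fin n) ℝ, Q.totalDegree ≤ d + 1 ∧
      ∀ x : EuclideanSpace ℝ (Fin n),
        (∫ a : EuclideanSpace ℝ (Fin n),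
            θ a * (x j - a j) *
              ∫ t in (0 : ℝ)..1,
                t ^ (ℓ - 1) * MvPolynomial.eval (fun i => (a + t • (x - a)) i) P) =
          MvPolynomial.eval (fun i => x i) Q := by
  let I := weightedIteratedIntegral volume hθ.continuous hθc
  refine ⟨MvPolynomial.mapCoeffs I (poincareIntegrand ℓ j P), ?_, fun x => ?_⟩
  · exact (MvPolynomial.totalDegree_mapCoeffs_le _ _).trans
      ((totalDegree_poincareIntegrand_le ℓ j P).trans (Nat.add_le_add_right hP 1))
  · simp only [MvPolynomial.eval_mapCoeffs, I, weightedIteratedIntegral_apply,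
      poincareIntegrand_eval_apply, intervalIntegral.integral_const_mul, mul_assoc]

theorem stmt5 {n : ℕ} (hn : 1 ≤ n) (θ : EuclideanSpace ℝ (Fin n) → ℝ)
    (hθ : ContDiff ℝ (⊤ : ℕ∞) θ) (hθc : HasCompactSupport θ)
    (ℓ : ℕ) (hℓ1 : 1 ≤ ℓ) (hℓn : ℓ ≤ n) (j : Fin n)
    (d : ℕ) (P : MvPolynomial (Fin n) ℝ) (hP : P.totalDegree ≤ d) :
    ∃ Q : MvPolynomial (Fin n) ℝ, Q.totalDegree ≤ d + 1 ∧
      ∀ x : EuclideanSpace ℝ (Fin n),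
        (∫ a : EuclideanSpace ℝ (Fin n),
            θ a * (x j - a j) *
              ∫ t in (0 : ℝ)..1,
                t ^ (ℓ - 1) * MvPolynomial.eval (fun i => (a + t • (x - a)) i) P) =
          MvPolynomial.eval (fun i => x i) Q :=
  stmt5_general θ hθ hθc ℓ j d P hP

end
end

section
/- Cartan's formula for the dilation flow: let 1 ≤ ℓ ≤ n, let u be a C¹ ℓ-form on ℝⁿ, and let a, x ∈ ℝⁿ and t ∈ ℝ. For each t define the (ℓ−1)-form w_t on ℝⁿ by w_t(z) = t^{ℓ−1} (z−a) ⌟ u(a + t(z−a)). Then the derivative in t of t^ℓ u(a + t(x−a)) (an Alt^ℓ(ℝⁿ)-valued function of t) satisfies d/dt [ t^ℓ u(a + t(x−a)) ] = (d w_t)(x) + t^ℓ (x−a) ⌟ (du)(a + t(x−a)). -/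
/-!
Put `y = a + t(x−a)` and `ℓ = m + 1`. By the product rule the derivative of
`z ↦ u(a+t(z−a))(z−a, w)` in direction `h` is `u(y)(h, w) + t Du(y)h (x−a, w)`; antisymmetrising
over the first slot, the first term sums to `ℓ u(y)` (alternating maps satisfy
`Σ_k (−1)^k ω(v_k, v̂_k) = ℓ ω(v)`), so `d w_t(x) = ℓ t^m u(y) + t^ℓ d((x−a) ⌟ u)(y)`.
Cartan's formula for the constant vector field `x−a`, `d((x−a) ⌟ u) + (x−a) ⌟ du = D_{x−a} u`,
turns the right-hand side of the claim into `ℓ t^m u(y) + t^ℓ Du(y)(x−a)`, which is the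
derivative of `t^ℓ u(a+t(x−a))`.
-/

noncomputable section

/-- Evaluation of the exterior derivative of an `m`-form (given as a function into
evaluations) at `x` on the `(m+1)`-tuple `v`:
`du(x)(v₀,…,v_m) = Σ_k (−1)^k (Du(x)v_k)(v₀,…,v̂_k,…,v_m)`,
where the Fréchet derivative is taken of the scalar-valued evaluations. -/
def extD {n m : ℕ} (u : EuclideanSpace ℝ (Fin n) → (Fin m → EuclideanSpace ℝ (Fin n)) → ℝ)
    (x : EuclideanSpace ℝ (Fin n)) (v : Fin (m + 1) → EuclideanSpace ℝ (Fin n)) : ℝ :=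
  ∑ k : Fin (m + 1),
    (-1 : ℝ) ^ (k : ℕ) * fderiv ℝ (fun z => u z fun j => v (k.succAbove j)) x (v k)

theorem AlternatingMap.sum_neg_one_pow_mul_cons_removeNth {R M : Type*} [CommRing R]
    [AddCommGroup M] [Module R M] {m : ℕ} (ω : M [⋀^Fin (m + 1)]→ₗ[R] R) (v : Fin (m + 1) → M) :
    ∑ k : Fin (m + 1), (-1) ^ (k : ℕ) * ω (Fin.cons (v k) (k.removeNth v)) = (m + 1) * ω v := by
  simpa only [alternatizeUncurryFin_apply, curryLeft_apply_apply, smul_apply, zsmul_eq_mul,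
    Int.cast_pow, Int.cast_neg, Int.cast_one, Matrix.vecCons, nsmul_eq_mul, Nat.cast_succ]
    using congrArg (· v) (alternatizeUncurryFin_curryLeft ω)

section Dilation

variable {E G : Type*} [NormedAddCommGroup E] [NormedSpace ℝ E] [FiniteDimensional ℝ E]
  [NormedAddCommGroup G] [NormedSpace ℝ G] {m : ℕ}

def AlternatingMap.consCLM (ω : E [⋀^Fin (m + 1)]→ₗ[ℝ] G) (w : Fin m → E) : E →L[ℝ] G :=
  LinearMap.toContinuousLinearMap
    { toFun := fun p => ω (Fin.cons p w)
      map_add' := ω.toMultilinearMap.cons_add w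
      map_smul' := ω.toMultilinearMap.cons_smul w }

@[simp]
theorem AlternatingMap.consCLM_apply (ω : E [⋀^Fin (m + 1)]→ₗ[ℝ] G) (w : Fin m → E) (p : E) :
    ω.consCLM w p = ω (Fin.cons p w) :=
  rfl

/-- In finite dimension, `C¹` evaluations make `z ↦ (u z).consCLM w` a `C¹` family of continuous
linear maps, so the product rule for `(c z) (g z)` applies. -/
theorem hasFDerivAt_dilation_cons (u : E → E [⋀^Fin (m + 1)]→ₗ[ℝ] G)
    (hu : ∀ v, ContDiff ℝ 1 fun z => u z v) (a x : E) (t : ℝ) (w : Fin m → E) :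
    HasFDerivAt (fun z => u (a + t • (z - a)) (Fin.cons (z - a) w))
      ((u (a + t • (x - a))).consCLM w +
        t • fderiv ℝ (fun z => u z (Fin.cons (x - a) w)) (a + t • (x - a))) x := by
  set y := a + t • (x - a)
  have hc : Differentiable ℝ fun z => (u z).consCLM w :=
    (contDiff_clm_apply_iff.mpr fun p => hu (Fin.cons p w)).differentiable one_ne_zero
  have hdilation : HasFDerivAt (fun z : E => a + t • (z - a)) (t • ContinuousLinearMap.id ℝ E) x :=
    (((hasFDerivAt_id x).sub_const a).const_smul t).const_add a
  refine ((hc y).hasFDerivAt.comp x hdilation).clm_apply ((hasFDerivAt_id x).sub_const a)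
    |>.congr_fderiv ?_
  have hev : fderiv ℝ (fun z => u z (Fin.cons (x - a) w)) y =
      (fderiv ℝ (fun z => (u z).consCLM w) y).flip (x - a) := by
    simpa using fderiv_clm_apply (hc y) (differentiableAt_const (x - a))
  ext h
  simp [hev, y]

end Dilation

section ExteriorDerivative

variable {n m : ℕ}

/-- Cartan's formula `d(p ⌟ u) + p ⌟ du = D_p u` for a constant vector field `p`. -/
theorem extD_cons_add_extD_cons
    (u : EuclideanSpace ℝ (Fin n) → (Fin (m + 1) → EuclideanSpace ℝ (Fin n)) → ℝ)
    (p y : EuclideanSpace ℝ (Fin n)) (v : Fin (m + 1) → EuclideanSpace ℝ (Fin n)) :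
    extD (fun z w => u z (Fin.cons p w)) y v + extD u y (Fin.cons p v) =
      fderiv ℝ (fun z => u z v) y p := by
  have hremove (k : Fin (m + 1)) :
      (fun j => (Fin.cons p v : Fin (m + 2) → _) (k.succ.succAbove j)) =
        Fin.cons p (fun j => v (k.succAbove j)) :=
    Fin.cons_comp_succ_succAbove p v k
  simp only [extD, Fin.sum_univ_succ (n := m + 1), hremove, Fin.cons_zero, Fin.cons_succ,
    Fin.val_zero, Fin.val_succ, pow_zero, one_mul, Fin.succAbove_zero, pow_succ, mul_neg,
    mul_one, neg_mul, Finset.sum_neg_distrib]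
  ring

theorem extD_dilation_cons
    (u : EuclideanSpace ℝ (Fin n) → AlternatingMap ℝ (EuclideanSpace ℝ (Fin n)) ℝ (Fin (m + 1)))
    (hu : ∀ v, ContDiff ℝ 1 fun z => u z v) (a x : EuclideanSpace ℝ (Fin n)) (t : ℝ)
    (v : Fin (m + 1) → EuclideanSpace ℝ (Fin n)) :
    extD (fun z w => t ^ m * u (a + t • (z - a)) (Fin.cons (z - a) w)) x v =
      t ^ m * ((m + 1) * u (a + t • (x - a)) v) +
        t ^ (m + 1) * extD (fun z w => u z (Fin.cons (x - a) w)) (a + t • (x - a)) v := by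
  have hterm (k : Fin (m + 1)) :
      fderiv ℝ (fun z => t ^ m * u (a + t • (z - a)) (Fin.cons (z - a) fun j => v (k.succAbove j)))
          x (v k) =
        t ^ m * u (a + t • (x - a)) (Fin.cons (v k) fun j => v (k.succAbove j)) + t ^ (m + 1) *
          fderiv ℝ (fun z => u z (Fin.cons (x - a) fun j => v (k.succAbove j))) (a + t • (x - a))
            (v k) := by
    rw [((hasFDerivAt_dilation_cons u hu a x t _).const_mul (t ^ m)).fderiv]
    simp only [smul_apply, add_apply, AlternatingMap.consCLM_apply, smul_eq_mul]
    ring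
  have hsum := (u (a + t • (x - a))).sum_neg_one_pow_mul_cons_removeNth v
  unfold Fin.removeNth at hsum
  rw [← hsum, extD, extD, Finset.mul_sum, Finset.mul_sum, ← Finset.sum_add_distrib]
  refine Finset.sum_congr rfl fun k _ => ?_
  rw [hterm]
  ring

end ExteriorDerivative

theorem stmt6_general {n m : ℕ}
    (u : EuclideanSpace ℝ (Fin n) →
      AlternatingMap ℝ (EuclideanSpace ℝ (Fin n)) ℝ (Fin (m + 1)))
    (hu : ∀ v : Fin (m + 1) → EuclideanSpace ℝ (Fin n), ContDiff ℝ 1 fun z => u z v)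
    (a x : EuclideanSpace ℝ (Fin n)) (t : ℝ)
    (v : Fin (m + 1) → EuclideanSpace ℝ (Fin n)) :
    HasDerivAt (fun s : ℝ => s ^ (m + 1) * u (a + s • (x - a)) v)
      (extD (fun z w => t ^ m * u (a + t • (z - a)) (Fin.cons (z - a) w)) x v +
        t ^ (m + 1) * extD (fun z w => u z w) (a + t • (x - a)) (Fin.cons (x - a) v)) t := by
  set y := a + t • (x - a)
  have hline : HasDerivAt (fun s : ℝ => a + s • (x - a)) (x - a) t := by
    simpa using ((hasDerivAt_id t).smul_const (x - a)).const_add a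
  have hform : HasDerivAt (fun s => u (a + s • (x - a)) v) (fderiv ℝ (fun z => u z v) y (x - a)) t :=
    ((hu v).differentiable one_ne_zero y).hasFDerivAt.comp_hasDerivAt (l := fun z => u z v) t hline
  rw [extD_dilation_cons u hu, add_assoc, ← mul_add,
    extD_cons_add_extD_cons (fun z w => u z w) (x - a) y v]
  refine ((hasDerivAt_pow (m + 1) t).fun_mul hform).congr_deriv ?_
  push_cast [Nat.add_sub_cancel]
  ring

/-- Cartan's formula for the dilation flow with center `a`, evaluated on an arbitrary
tuple of vectors `v`:
`d/dt [t^ℓ u(a+t(x−a))] = (d w_t)(x) + t^ℓ (x−a) ⌟ (du)(a+t(x−a))`,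
where `w_t(z) = t^{ℓ−1} (z−a) ⌟ u(a+t(z−a))` and `ℓ = m+1`. -/
theorem stmt6 {n m : ℕ} (hmn : m + 1 ≤ n)
    (u : EuclideanSpace ℝ (Fin n) →
      AlternatingMap ℝ (EuclideanSpace ℝ (Fin n)) ℝ (Fin (m + 1)))
    (hu : ∀ v : Fin (m + 1) → EuclideanSpace ℝ (Fin n), ContDiff ℝ 1 fun z => u z v)
    (a x : EuclideanSpace ℝ (Fin n)) (t : ℝ)
    (v : Fin (m + 1) → EuclideanSpace ℝ (Fin n)) :
    HasDerivAt (fun s : ℝ => s ^ (m + 1) * u (a + s • (x - a)) v)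
      (extD (fun z w => t ^ m * u (a + t • (z - a)) (Fin.cons (z - a) w)) x v +
        t ^ (m + 1) * extD (fun z w => u z w) (a + t • (x - a)) (Fin.cons (x - a) v)) t :=
  stmt6_general u hu a x t v
end
end

section
/- Let j, ℓ ∈ {1,…,n} and define k₁(x,z) = z_j ∫₁^∞ s^{n−ℓ}(s+1)^{ℓ−1} θ(x+sz) ds. For each x ∈ ℝⁿ the function z ↦ k₁(x,z) is Lebesgue integrable, and its Fourier transform in z satisfies, for all x, ξ ∈ ℝⁿ, k̂₁(x,ξ) = ∫₀¹ (t+1)^{ℓ−1} e^{i t ⟨ξ,x⟩} ( i (∂_j θ̂)(tξ) − x_j θ̂(tξ) ) dt, where θ̂ is the Fourier transform of θ and ∂_j θ̂ its j-th partial derivative. -/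
/-!
Fubini in `(z, s)` and the substitution `w = x + s z` turn the `z`-integral at fixed `s` into
`s^{-(n+1)} e^{i⟨ξ,x⟩/s}` times the Fourier transform of `(w_j - x_j) θ(w)` at `ξ/s`, which is
`i ∂_j θ̂(ξ/s) - x_j θ̂(ξ/s)`. Since `s^{n-ℓ} (s+1)^{ℓ-1} s^{-(n+1)} = s^{-2} (1/s + 1)^{ℓ-1}`,
the substitution `t = 1/s` maps the `s`-integral over `(1, ∞)` onto the stated integral over
`(0, 1)`. The same computation with absolute values shows that the `z`-integral of
`|z_j θ(x + s z)|` is `O(s^{-(n+1)})`, which justifies Fubini and gives the integrability of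
`k₁(x, ·)`.
-/

open MeasureTheory Set
open scoped Real RealInnerProductSpace

noncomputable section

/-- `k₁(x,z) = z_j ∫₁^∞ s^{n−ℓ}(s+1)^{ℓ−1} θ(x+sz) ds`. -/
def kone {n : ℕ} (θ : EuclideanSpace ℝ (Fin n) → ℝ) (ℓ : ℕ) (j : Fin n)
    (x z : EuclideanSpace ℝ (Fin n)) : ℝ :=
  z j * ∫ s in Set.Ioi (1 : ℝ), s ^ (n - ℓ) * (s + 1) ^ (ℓ - 1) * θ (x + s • z)

/-- The Fourier transform `θ̂(ξ) = ∫ e^{−i⟨ξ,z⟩} θ(z) dz`. -/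
def thetaHat {n : ℕ} (θ : EuclideanSpace ℝ (Fin n) → ℝ)
    (ξ : EuclideanSpace ℝ (Fin n)) : ℂ :=
  ∫ z : EuclideanSpace ℝ (Fin n),
    Complex.exp (-Complex.I * ((⟪ξ, z⟫ : ℝ) : ℂ)) * ((θ z : ℝ) : ℂ)

section FourierDerivative

variable {V : Type*} [NormedAddCommGroup V] [InnerProductSpace ℝ V] [MeasurableSpace V]
  [BorelSpace V] [SecondCountableTopology V] {μ : Measure V}

theorem I_mul_fderiv_integral_exp_inner {f : V → ℂ} (hf : Integrable f μ)
    (hf' : Integrable (fun v ↦ ‖v‖ * ‖f v‖) μ) (ξ u : V) :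
    Complex.I * fderiv ℝ (fun ξ ↦ ∫ v, Complex.exp (-Complex.I * ((⟪ξ, v⟫ : ℝ) : ℂ)) * f v ∂μ) ξ u
      = ∫ v, Complex.exp (-Complex.I * ((⟪ξ, v⟫ : ℝ) : ℂ)) * ⟪v, u⟫ * f v ∂μ := by
  -- With the character `t ↦ e^{2πit}` and this pairing, Mathlib's vector Fourier integral is
  -- the transform `ξ ↦ ∫ e^{-i⟪ξ,v⟫} f v` used here.
  set L : V →L[ℝ] V →L[ℝ] ℝ := (2 * π)⁻¹ • innerSL ℝ
  have hchar (v ξ : V) :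
      (Real.fourierChar (-L.toLinearMap₁₂ v ξ) : ℂ) = Complex.exp (-Complex.I * ⟪ξ, v⟫) := by
    have hL : L.toLinearMap₁₂ v ξ = (2 * π)⁻¹ * ⟪v, ξ⟫ := rfl
    rw [Real.fourierChar_apply, hL, real_inner_comm]
    congr 1
    push_cast
    field_simp
  have hF : VectorFourier.fourierIntegral Real.fourierChar μ L.toLinearMap₁₂ f =
      fun ξ ↦ ∫ v, Complex.exp (-Complex.I * ((⟪ξ, v⟫ : ℝ) : ℂ)) * f v ∂μ := by
    ext ξ
    simp only [VectorFourier.fourierIntegral, Circle.smul_def, hchar, smul_eq_mul]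
  have hint : Integrable (VectorFourier.fourierSMulRight L f) μ :=
    (hf'.const_mul (2 * π * ‖L‖)).mono' hf.aestronglyMeasurable.fourierSMulRight
      (ae_of_all _ fun v ↦ (VectorFourier.norm_fourierSMulRight_le L f v).trans_eq (by ring))
  rw [← hF, (VectorFourier.hasFDerivAt_fourierIntegral L hf hf' ξ).fderiv,
    VectorFourier.fourierIntegral, ContinuousLinearMap.integral_apply
      ((VectorFourier.fourierIntegral_convergent_iff Real.continuous_fourierChar L.continuous₂
        ξ).2 hint),
    ← integral_const_mul]
  congr 1
  ext v
  have hL : L v u = (2 * π)⁻¹ * ⟪v, u⟫ := rfl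
  simp only [Circle.smul_def, hchar, FunLike.coe_smul, Pi.smul_apply,
    VectorFourier.fourierSMulRight_apply, smul_eq_mul]
  rw [hL, Complex.real_smul]
  push_cast
  field_simp
  ring_nf
  rw [Complex.I_sq]
  ring

end FourierDerivative

section ChangeOfVariables

variable {V G : Type*} [NormedAddCommGroup V] [NormedSpace ℝ V] [FiniteDimensional ℝ V]
  [MeasurableSpace V] [BorelSpace V] (μ : Measure V) [μ.IsAddHaarMeasure]
  [NormedAddCommGroup G] [NormedSpace ℝ G]

theorem integral_comp_inv_smul_sub (g : V → G) (x : V) {s : ℝ} (hs : 0 ≤ s) :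
    ∫ w, g (s⁻¹ • (w - x)) ∂μ = s ^ Module.finrank ℝ V • ∫ z, g z ∂μ := by
  rw [integral_sub_right_eq_self (fun w ↦ g (s⁻¹ • w)),
    Measure.integral_comp_inv_smul_of_nonneg μ g hs]

end ChangeOfVariables

section Inversion

variable {G : Type*} [NormedAddCommGroup G] [NormedSpace ℝ G]

theorem image_inv_Ioi_one : (·⁻¹) '' Ioi (1 : ℝ) = Ioo 0 1 := by
  ext t
  constructor
  · rintro ⟨s, hs, rfl⟩
    exact ⟨inv_pos.2 (one_pos.trans hs), inv_lt_one_of_one_lt₀ hs⟩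
  · intro ht
    exact ⟨t⁻¹, (one_lt_inv₀ ht.1).2 ht.2, inv_inv t⟩

theorem integrableOn_Ioi_one_inv_sq_smul_comp_inv {f : ℝ → G} (hf : IntegrableOn f (Ioo 0 1)) :
    IntegrableOn (fun s ↦ (s ^ 2)⁻¹ • f s⁻¹) (Ioi 1) := by
  have h := integrableOn_image_iff_integrableOn_abs_deriv_smul measurableSet_Ioi
    (fun s hs ↦ (hasDerivAt_inv (one_pos.trans hs).ne').hasDerivWithinAt)
    (fun a _ b _ h ↦ inv_injective h) f
  rw [image_inv_Ioi_one] at h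
  simpa [abs_inv, sq_abs] using h.1 hf

theorem integral_Ioi_one_inv_sq_smul_comp_inv (f : ℝ → G) :
    ∫ s in Ioi 1, (s ^ 2)⁻¹ • f s⁻¹ = ∫ t in (0 : ℝ)..1, f t := by
  have h := integral_image_eq_integral_abs_deriv_smul measurableSet_Ioi
    (fun s hs ↦ (hasDerivAt_inv (one_pos.trans hs).ne').hasDerivWithinAt)
    (fun a _ b _ h ↦ inv_injective h) f
  rw [image_inv_Ioi_one] at h
  rw [intervalIntegral.integral_of_le zero_le_one, integral_Ioc_eq_integral_Ioo, h]
  simp [abs_inv, sq_abs]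

end Inversion

theorem pow_sub_mul_add_one_pow_mul_inv_pow_succ {s : ℝ} (hs : s ≠ 0) {n ℓ : ℕ} (hℓ1 : 1 ≤ ℓ)
    (hℓn : ℓ ≤ n) :
    s ^ (n - ℓ) * (s + 1) ^ (ℓ - 1) * (s ^ (n + 1))⁻¹ = (s ^ 2)⁻¹ * (s⁻¹ + 1) ^ (ℓ - 1) := by
  obtain ⟨a, rfl⟩ := Nat.exists_eq_add_of_le' hℓ1
  obtain ⟨b, rfl⟩ := Nat.exists_eq_add_of_le hℓn
  have hinv : s⁻¹ + 1 = (s + 1) / s := by field_simp; ring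
  rw [Nat.add_sub_cancel_left, Nat.add_sub_cancel, hinv, div_pow]
  field_simp
  ring

section Kernel

variable {n : ℕ} {θ : EuclideanSpace ℝ (Fin n) → ℝ}

local notation "E" => EuclideanSpace ℝ (Fin n)

theorem I_mul_fderiv_thetaHat (hθ : Continuous θ) (hθc : HasCompactSupport θ) (ξ : E)
    (j : Fin n) :
    Complex.I * fderiv ℝ (thetaHat θ) ξ (EuclideanSpace.single j 1) =
      ∫ w : E,
        Complex.exp (-Complex.I * ((⟪ξ, w⟫ : ℝ) : ℂ)) * ((w j : ℝ) : ℂ) * ((θ w : ℝ) : ℂ) := by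
  have hθc' : HasCompactSupport (fun w : E ↦ ((θ w : ℝ) : ℂ)) :=
    hθc.comp_left Complex.ofReal_zero
  have hf : Integrable (fun w : E ↦ ((θ w : ℝ) : ℂ)) :=
    (Complex.continuous_ofReal.comp hθ).integrable_of_hasCompactSupport hθc'
  have hf' : Integrable (fun w : E ↦ ‖w‖ * ‖((θ w : ℝ) : ℂ)‖) :=
    (continuous_norm.mul (Complex.continuous_ofReal.comp hθ).norm).integrable_of_hasCompactSupport
      hθc'.norm.mul_left
  exact (I_mul_fderiv_integral_exp_inner hf hf' ξ (EuclideanSpace.single j 1)).trans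
    (by simp [EuclideanSpace.inner_single_right])

theorem integral_exp_inner_mul_coord_mul_comp_add_smul (hθ : Continuous θ)
    (hθc : HasCompactSupport θ) (x ξ : E) (j : Fin n) {s : ℝ} (hs : 0 < s) :
    ∫ z : E, Complex.exp (-Complex.I * ((⟪ξ, z⟫ : ℝ) : ℂ)) * ((z j : ℝ) : ℂ) *
        ((θ (x + s • z) : ℝ) : ℂ) =
      (((s ^ (n + 1))⁻¹ : ℝ) : ℂ) *
        (Complex.exp (Complex.I * ((s⁻¹ : ℝ) : ℂ) * ((⟪ξ, x⟫ : ℝ) : ℂ)) *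
          (Complex.I * fderiv ℝ (thetaHat θ) (s⁻¹ • ξ) (EuclideanSpace.single j 1) -
            ((x j : ℝ) : ℂ) * thetaHat θ (s⁻¹ • ξ))) := by
  set e : E → ℂ := fun w ↦ Complex.exp (-Complex.I * ((⟪s⁻¹ • ξ, w⟫ : ℝ) : ℂ)) with he
  have hsub := integral_comp_inv_smul_sub (volume : Measure E)
    (fun z : E ↦ Complex.exp (-Complex.I * ((⟪ξ, z⟫ : ℝ) : ℂ)) * ((z j : ℝ) : ℂ) *
      ((θ (x + s • z) : ℝ) : ℂ)) x hs.le
  simp only [smul_inv_smul₀ hs.ne', add_sub_cancel, finrank_euclideanSpace_fin] at hsub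
  have hΨ (w : E) : Complex.exp (-Complex.I * ((⟪ξ, s⁻¹ • (w - x)⟫ : ℝ) : ℂ)) *
        (((s⁻¹ • (w - x)) j : ℝ) : ℂ) * ((θ w : ℝ) : ℂ) =
      ((s⁻¹ : ℝ) : ℂ) * Complex.exp (Complex.I * ((s⁻¹ : ℝ) : ℂ) * ((⟪ξ, x⟫ : ℝ) : ℂ)) *
        (e w * ((w j : ℝ) : ℂ) * ((θ w : ℝ) : ℂ) - ((x j : ℝ) : ℂ) * (e w * ((θ w : ℝ) : ℂ))) := by
    have hexp : Complex.exp (-Complex.I * ((⟪ξ, s⁻¹ • (w - x)⟫ : ℝ) : ℂ)) =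
        Complex.exp (Complex.I * ((s⁻¹ : ℝ) : ℂ) * ((⟪ξ, x⟫ : ℝ) : ℂ)) * e w := by
      rw [he, ← Complex.exp_add, real_inner_smul_right, real_inner_smul_left, inner_sub_right]
      push_cast
      ring_nf
    rw [hexp]
    simp only [PiLp.smul_apply, PiLp.sub_apply, smul_eq_mul]
    push_cast
    ring
  have hA : ∫ w : E, e w * ((w j : ℝ) : ℂ) * ((θ w : ℝ) : ℂ) =
      Complex.I * fderiv ℝ (thetaHat θ) (s⁻¹ • ξ) (EuclideanSpace.single j 1) :=
    (I_mul_fderiv_thetaHat hθ hθc (s⁻¹ • ξ) j).symm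
  have hB : ∫ w : E, e w * ((θ w : ℝ) : ℂ) = thetaHat θ (s⁻¹ • ξ) := rfl
  have hθc' : HasCompactSupport (fun w : E ↦ ((θ w : ℝ) : ℂ)) :=
    hθc.comp_left Complex.ofReal_zero
  have hintA : Integrable (fun w : E ↦ e w * ((w j : ℝ) : ℂ) * ((θ w : ℝ) : ℂ)) :=
    (by fun_prop : Continuous _).integrable_of_hasCompactSupport hθc'.mul_left
  have hintB : Integrable (fun w : E ↦ e w * ((θ w : ℝ) : ℂ)) :=
    (by fun_prop : Continuous _).integrable_of_hasCompactSupport hθc'.mul_left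
  simp only [hΨ] at hsub
  rw [integral_const_mul, integral_sub hintA (hintB.const_mul _), integral_const_mul, hA, hB,
    ← inv_smul_eq_iff₀ (pow_ne_zero n hs.ne'), Complex.real_smul] at hsub
  rw [← hsub]
  push_cast
  ring

theorem integral_abs_coord_mul_comp_add_smul (x : E) (j : Fin n) {s : ℝ} (hs : 0 < s) :
    ∫ z : E, |z j * θ (x + s • z)| = (s ^ (n + 1))⁻¹ * ∫ w : E, |w j - x j| * |θ w| := by
  have hsub := integral_comp_inv_smul_sub (volume : Measure E)
    (fun z : E ↦ |z j * θ (x + s • z)|) x hs.le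
  have habs (w : E) : |(s⁻¹ • (w - x)) j * θ w| = s⁻¹ * (|w j - x j| * |θ w|) := by
    simp only [PiLp.smul_apply, PiLp.sub_apply, smul_eq_mul, abs_mul, abs_inv,
      abs_of_pos hs]
    ring
  simp only [smul_inv_smul₀ hs.ne', add_sub_cancel, finrank_euclideanSpace_fin, habs] at hsub
  rw [integral_const_mul, ← inv_smul_eq_iff₀ (pow_ne_zero n hs.ne'), smul_eq_mul] at hsub
  rw [← hsub, pow_succ, mul_inv]
  ring

theorem integrable_kone_integrand (hθ : Continuous θ) (hθc : HasCompactSupport θ) (x : E)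
    (j : Fin n) {ℓ : ℕ} (hℓ1 : 1 ≤ ℓ) (hℓn : ℓ ≤ n) :
    Integrable (fun p : E × ℝ ↦ p.1 j * (p.2 ^ (n - ℓ) * (p.2 + 1) ^ (ℓ - 1) * θ (x + p.2 • p.1)))
      ((volume : Measure E).prod (volume.restrict (Ioi 1))) := by
  have hcont : Continuous
      (fun p : E × ℝ ↦ p.1 j * (p.2 ^ (n - ℓ) * (p.2 + 1) ^ (ℓ - 1) * θ (x + p.2 • p.1))) := by
    fun_prop
  rw [integrable_prod_iff' hcont.aestronglyMeasurable]
  constructor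
  · filter_upwards [ae_restrict_mem measurableSet_Ioi] with s hs
    have hsupp : HasCompactSupport (fun z : E ↦ θ (x + s • z)) :=
      hθc.comp_homeomorph
        ((Homeomorph.smulOfNeZero s (one_pos.trans hs).ne').trans (Homeomorph.addLeft x))
    exact (by fun_prop : Continuous _).integrable_of_hasCompactSupport
      hsupp.mul_left.mul_left
  · set C := ∫ w : E, |w j - x j| * |θ w|
    have hweight : IntegrableOn (fun s : ℝ ↦ C * ((s ^ 2)⁻¹ * (s⁻¹ + 1) ^ (ℓ - 1))) (Ioi 1) :=
      (integrableOn_Ioi_one_inv_sq_smul_comp_inv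
        ((by fun_prop : Continuous fun t : ℝ ↦ (t + 1) ^ (ℓ - 1)).integrableOn_Icc.mono_set
          Ioo_subset_Icc_self)).const_mul C
    refine hweight.congr_fun (fun s hs ↦ ?_) measurableSet_Ioi
    have hs0 : 0 < s := one_pos.trans hs
    have hnorm (z : E) : ‖z j * (s ^ (n - ℓ) * (s + 1) ^ (ℓ - 1) * θ (x + s • z))‖ =
        s ^ (n - ℓ) * (s + 1) ^ (ℓ - 1) * |z j * θ (x + s • z)| := by
      have hg : 0 ≤ s ^ (n - ℓ) * (s + 1) ^ (ℓ - 1) := by positivity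
      rw [Real.norm_eq_abs, abs_mul, abs_mul, abs_of_nonneg hg, abs_mul]
      ring
    simp only [hnorm]
    rw [integral_const_mul, integral_abs_coord_mul_comp_add_smul x j hs0,
      ← pow_sub_mul_add_one_pow_mul_inv_pow_succ hs0.ne' hℓ1 hℓn]
    ring

theorem integrable_exp_inner_mul_kone_integrand (hθ : Continuous θ) (hθc : HasCompactSupport θ)
    (x ξ : E) (j : Fin n) {ℓ : ℕ} (hℓ1 : 1 ≤ ℓ) (hℓn : ℓ ≤ n) :
    Integrable (fun p : E × ℝ ↦ Complex.exp (-Complex.I * ((⟪ξ, p.1⟫ : ℝ) : ℂ)) *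
        ((p.1 j * (p.2 ^ (n - ℓ) * (p.2 + 1) ^ (ℓ - 1) * θ (x + p.2 • p.1)) : ℝ) : ℂ))
      ((volume : Measure E).prod (volume.restrict (Ioi 1))) :=
  (integrable_kone_integrand hθ hθc x j hℓ1 hℓn).ofReal.bdd_mul (c := 1)
    (by fun_prop : Continuous _).aestronglyMeasurable
    (ae_of_all _ fun p ↦ by rw [Complex.norm_exp]; simp)

theorem integral_exp_inner_mul_kone_integrand (hθ : Continuous θ) (hθc : HasCompactSupport θ)
    (x ξ : E) (j : Fin n) {ℓ : ℕ} (hℓ1 : 1 ≤ ℓ) (hℓn : ℓ ≤ n) {s : ℝ} (hs : 0 < s) :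
    ∫ z : E, Complex.exp (-Complex.I * ((⟪ξ, z⟫ : ℝ) : ℂ)) *
        ((z j * (s ^ (n - ℓ) * (s + 1) ^ (ℓ - 1) * θ (x + s • z)) : ℝ) : ℂ) =
      (s ^ 2)⁻¹ • ((((s⁻¹ + 1) ^ (ℓ - 1) : ℝ) : ℂ) *
        Complex.exp (Complex.I * ((s⁻¹ : ℝ) : ℂ) * ((⟪ξ, x⟫ : ℝ) : ℂ)) *
        (Complex.I * fderiv ℝ (thetaHat θ) (s⁻¹ • ξ) (EuclideanSpace.single j 1) -
          ((x j : ℝ) : ℂ) * thetaHat θ (s⁻¹ • ξ))) := by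
  have hweight := pow_sub_mul_add_one_pow_mul_inv_pow_succ hs.ne' hℓ1 hℓn
  have hpull (z : E) : Complex.exp (-Complex.I * ((⟪ξ, z⟫ : ℝ) : ℂ)) *
        ((z j * (s ^ (n - ℓ) * (s + 1) ^ (ℓ - 1) * θ (x + s • z)) : ℝ) : ℂ) =
      ((s ^ (n - ℓ) * (s + 1) ^ (ℓ - 1) : ℝ) : ℂ) *
        (Complex.exp (-Complex.I * ((⟪ξ, z⟫ : ℝ) : ℂ)) * ((z j : ℝ) : ℂ) *
          ((θ (x + s • z) : ℝ) : ℂ)) := by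
    push_cast
    ring
  simp only [hpull]
  rw [integral_const_mul, integral_exp_inner_mul_coord_mul_comp_add_smul hθ hθc x ξ j hs,
    ← mul_assoc, ← Complex.ofReal_mul, hweight, Complex.real_smul]
  push_cast
  ring

end Kernel

theorem stmt10_general {n : ℕ} (θ : EuclideanSpace ℝ (Fin n) → ℝ)
    (hθ : ContDiff ℝ (⊤ : ℕ∞) θ) (hθc : HasCompactSupport θ)
    (ℓ : ℕ) (hℓ1 : 1 ≤ ℓ) (hℓn : ℓ ≤ n) (j : Fin n) :
    (∀ x : EuclideanSpace ℝ (Fin n), Integrable (fun z => kone θ ℓ j x z)) ∧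
    (∀ x ξ : EuclideanSpace ℝ (Fin n),
      (∫ z : EuclideanSpace ℝ (Fin n),
          Complex.exp (-Complex.I * ((⟪ξ, z⟫ : ℝ) : ℂ)) * ((kone θ ℓ j x z : ℝ) : ℂ)) =
        ∫ t in (0 : ℝ)..1,
          (((t + 1) ^ (ℓ - 1) : ℝ) : ℂ) *
            Complex.exp (Complex.I * (t : ℂ) * ((⟪ξ, x⟫ : ℝ) : ℂ)) *
            (Complex.I * fderiv ℝ (thetaHat θ) (t • ξ) (EuclideanSpace.single j 1) -
              ((x j : ℝ) : ℂ) * thetaHat θ (t • ξ))) := by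
  have hc : Continuous θ := hθ.continuous
  have hkone (x z : EuclideanSpace ℝ (Fin n)) : kone θ ℓ j x z =
      ∫ s : ℝ in Ioi 1, z j * (s ^ (n - ℓ) * (s + 1) ^ (ℓ - 1) * θ (x + s • z)) :=
    (integral_const_mul _ _).symm
  refine ⟨fun x ↦ ?_, fun x ξ ↦ ?_⟩
  · simpa only [hkone] using (integrable_kone_integrand hc hθc x j hℓ1 hℓn).integral_prod_left
  · calc _ = ∫ z : EuclideanSpace ℝ (Fin n), ∫ s in Ioi 1,
          Complex.exp (-Complex.I * ((⟪ξ, z⟫ : ℝ) : ℂ)) *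
            ((z j * (s ^ (n - ℓ) * (s + 1) ^ (ℓ - 1) * θ (x + s • z)) : ℝ) : ℂ) := by
          congr 1 with z
          rw [hkone, ← integral_complex_ofReal, ← integral_const_mul]
      _ = _ := integral_integral_swap
          (integrable_exp_inner_mul_kone_integrand hc hθc x ξ j hℓ1 hℓn)
      _ = _ := setIntegral_congr_fun measurableSet_Ioi fun s hs ↦
          integral_exp_inner_mul_kone_integrand hc hθc x ξ j hℓ1 hℓn (one_pos.trans hs)
      _ = _ := by rw [← integral_Ioi_one_inv_sq_smul_comp_inv]

theorem stmt10 {n : ℕ} (hn : 1 ≤ n) (θ : EuclideanSpace ℝ (Fin n) → ℝ)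
    (hθ : ContDiff ℝ (⊤ : ℕ∞) θ) (hθc : HasCompactSupport θ)
    (ℓ : ℕ) (hℓ1 : 1 ≤ ℓ) (hℓn : ℓ ≤ n) (j : Fin n) :
    (∀ x : EuclideanSpace ℝ (Fin n), Integrable (fun z => kone θ ℓ j x z)) ∧
    (∀ x ξ : EuclideanSpace ℝ (Fin n),
      (∫ z : EuclideanSpace ℝ (Fin n),
          Complex.exp (-Complex.I * ((⟪ξ, z⟫ : ℝ) : ℂ)) * ((kone θ ℓ j x z : ℝ) : ℂ)) =
        ∫ t in (0 : ℝ)..1,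
          (((t + 1) ^ (ℓ - 1) : ℝ) : ℂ) *
            Complex.exp (Complex.I * (t : ℂ) * ((⟪ξ, x⟫ : ℝ) : ℂ)) *
            (Complex.I * fderiv ℝ (thetaHat θ) (t • ξ) (EuclideanSpace.single j 1) -
              ((x j : ℝ) : ℂ) * thetaHat θ (t • ξ))) :=
  stmt10_general θ hθ hθc ℓ hℓ1 hℓn j
end
end
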